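/- Let m ∈ ℕ₀ and let f : ℝ → ℝ be m times pseudo-differentiable with m-fold pseudo-derivative f^{(m)} ∈ L²(γ). Then the Hermite coefficients of f satisfy a_n(f) = o((n+1)^{−m/2}) as n → ∞. -/

import Mathlib

/-!
Write `φ` for the standard Gaussian density and `hₙ` for the normalized Hermite functions, so
that `(hₙ φ)' = -√(n+1) hₙ₊₁ φ`. If `f x = f 0 + ∫ t in 0..x, g t`, Fubini's theorem turns
`∫ f hₙ₊₁ φ` into `∫ g(t) (∫_{x ≥ t} hₙ₊₁ φ) dt = ∫ g hₙ φ / √(n+1)`, that is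
`aₙ₊₁(f) = aₙ(g) / √(n+1)`. Fubini applies as soon as `∫_{Ι 0 x} |g|` is
`O(exp (a|x| + c x²))` with `c < 1/2`; an `L²(γ)` function has this bound with `c = 1/4`, and it
passes from a pseudo-derivative to its primitive, hence along the whole chain
`f, f', …, f⁽ᵐ⁾`. Iterating, `a_{n+m}(f) = aₙ(f⁽ᵐ⁾) / √((n+1) ⋯ (n+m))`, and
`aₙ(f⁽ᵐ⁾) → 0` by Bessel's inequality. The orthonormality of the `hₙ` needed for Bessel comes
from the same recursion applied to `f = hᵢ₊₁`.
-/

open MeasureTheory ProbabilityTheory Filter Set Asymptotics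

noncomputable section

/-- The standard Gaussian measure `N(0,1)` on `ℝ`. -/
def stdGaussian : Measure ℝ := gaussianReal 0 1

/-- The `n`-th normalized probabilists' Hermite polynomial as a function `ℝ → ℝ`. -/
def hermiteFun (n : ℕ) (x : ℝ) : ℝ :=
  (Polynomial.aeval x (Polynomial.hermite n)) / Real.sqrt (n.factorial)

/-- The `n`-th Hermite coefficient `a_n(f) = ∫ f · h_n dγ`. -/
def hermiteCoeff (f : ℝ → ℝ) (n : ℕ) : ℝ :=
  ∫ x, f x * hermiteFun n x ∂stdGaussian

/-- `g` is a pseudo-derivative of `f`. -/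
def IsPseudoDeriv (f g : ℝ → ℝ) : Prop :=
  (∀ a b : ℝ, IntegrableOn g (Set.Icc a b) volume) ∧
  ∀ x : ℝ, f x = f 0 + ∫ t in (0:ℝ)..x, g t

/-- `g` is an `m`-fold pseudo-derivative of `f`. -/
def IsIterPseudoDeriv (m : ℕ) (f g : ℝ → ℝ) : Prop :=
  ∃ gs : ℕ → ℝ → ℝ, gs 0 = f ∧ gs m = g ∧ ∀ i < m, IsPseudoDeriv (gs i) (gs (i + 1))

open Topology
open scoped Interval
open Polynomial (aeval derivative hermite)

local notation "φ" => gaussianPDFReal 0 1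

/-- The signed indicator of `Ι 0 x`: `1` for `0 < t ≤ x` and `-1` for `x < t ≤ 0`. -/
def primitiveKernel (x t : ℝ) : ℝ := (if t ≤ x then 1 else 0) - if t ≤ 0 then 1 else 0

lemma measurable_primitiveKernel : Measurable fun p : ℝ × ℝ => primitiveKernel p.1 p.2 :=
  (Measurable.ite (measurableSet_le measurable_snd measurable_fst) measurable_const
    measurable_const).sub
    (Measurable.ite (measurableSet_le measurable_snd measurable_const) measurable_const
      measurable_const)

lemma primitiveKernel_mul (g : ℝ → ℝ) (x t : ℝ) :
    primitiveKernel x t * g t = (Ioc 0 x).indicator g t - (Ioc x 0).indicator g t := by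
  simp only [primitiveKernel, indicator, mem_Ioc]
  split_ifs <;> grind

lemma abs_primitiveKernel_mul (g : ℝ → ℝ) (x t : ℝ) :
    |primitiveKernel x t * g t| = (Ι 0 x).indicator (fun t => |g t|) t := by
  simp only [primitiveKernel, indicator, mem_uIoc]
  split_ifs <;> grind

section PrimitiveKernel

variable {g ψ : ℝ → ℝ} {x : ℝ}

lemma integrable_primitiveKernel_mul (hg : IntervalIntegrable g volume 0 x) :
    Integrable fun t => primitiveKernel x t * g t := by
  simp_rw [primitiveKernel_mul]
  exact (hg.1.integrable_indicator measurableSet_Ioc).sub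
    (hg.2.integrable_indicator measurableSet_Ioc)

lemma integral_primitiveKernel_mul (hg : IntervalIntegrable g volume 0 x) :
    ∫ t, primitiveKernel x t * g t = ∫ t in 0..x, g t := by
  simp_rw [primitiveKernel_mul]
  rw [integral_sub (hg.1.integrable_indicator measurableSet_Ioc)
    (hg.2.integrable_indicator measurableSet_Ioc), integral_indicator measurableSet_Ioc,
    integral_indicator measurableSet_Ioc, intervalIntegral]

lemma integral_mul_primitiveKernel (hψ : Integrable ψ) (hψ0 : ∫ x, ψ x = 0) (t : ℝ) :
    ∫ x, ψ x * primitiveKernel x t = ∫ x in Ici t, ψ x := by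
  have hsplit : ∀ x, ψ x * primitiveKernel x t =
      (Ici t).indicator ψ x - (if t ≤ 0 then 1 else 0) * ψ x := by
    intro x
    simp only [primitiveKernel, indicator, mem_Ici]
    split_ifs <;> ring
  simp_rw [hsplit]
  rw [integral_sub (hψ.indicator measurableSet_Ici) (hψ.const_mul _), integral_const_mul, hψ0,
    mul_zero, sub_zero, integral_indicator measurableSet_Ici]

lemma integrable_mul_primitiveKernel_mul (hg : LocallyIntegrable g) (hψ : AEStronglyMeasurable ψ)
    (hdom : Integrable fun x => ψ x * ∫ t in Ι 0 x, |g t|) :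
    Integrable (fun p : ℝ × ℝ => ψ p.1 * (primitiveKernel p.1 p.2 * g p.2))
      (volume.prod volume) := by
  have hmeas : AEStronglyMeasurable (fun p : ℝ × ℝ => ψ p.1 * (primitiveKernel p.1 p.2 * g p.2))
      (volume.prod volume) :=
    hψ.comp_fst.mul
      (measurable_primitiveKernel.aestronglyMeasurable.mul hg.aestronglyMeasurable.comp_snd)
  refine (integrable_prod_iff hmeas).2 ⟨Eventually.of_forall fun x =>
    (integrable_primitiveKernel_mul
      (hg.integrableOn_isCompact isCompact_uIcc).intervalIntegrable).const_mul (ψ x), ?_⟩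
  refine hdom.norm.congr (Eventually.of_forall fun x => ?_)
  dsimp only
  rw [Real.norm_eq_abs, abs_mul, abs_of_nonneg (integral_nonneg fun t => abs_nonneg _)]
  simp_rw [Real.norm_eq_abs, abs_mul (ψ x), abs_primitiveKernel_mul]
  rw [integral_const_mul, integral_indicator measurableSet_uIoc]

end PrimitiveKernel

lemma IsPseudoDeriv.locallyIntegrable {f g : ℝ → ℝ} (hfg : IsPseudoDeriv f g) :
    LocallyIntegrable g := fun x =>
  ⟨Icc (x - 1) (x + 1), Icc_mem_nhds (by linarith) (by linarith), hfg.1 _ _⟩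

lemma IsPseudoDeriv.intervalIntegrable {f g : ℝ → ℝ} (hfg : IsPseudoDeriv f g) (a b : ℝ) :
    IntervalIntegrable g volume a b :=
  (hfg.1 _ _).intervalIntegrable

theorem IsPseudoDeriv.integral_mul_eq {f g ψ : ℝ → ℝ} (hfg : IsPseudoDeriv f g)
    (hψ : Integrable ψ) (hψ0 : ∫ x, ψ x = 0)
    (hdom : Integrable fun x => ψ x * ∫ t in Ι 0 x, |g t|) :
    ∫ x, f x * ψ x = ∫ t, g t * ∫ x in Ici t, ψ x := by
  set F : ℝ × ℝ → ℝ := fun p => ψ p.1 * (primitiveKernel p.1 p.2 * g p.2)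
  have hF : Integrable F (volume.prod volume) :=
    integrable_mul_primitiveKernel_mul hfg.locallyIntegrable hψ.aestronglyMeasurable hdom
  have hsection : ∀ x, ∫ t, F (x, t) = ψ x * ∫ t in 0..x, g t := fun x => by
    rw [← integral_primitiveKernel_mul (hfg.intervalIntegrable 0 x)]
    exact integral_const_mul (ψ x) _
  calc ∫ x, f x * ψ x = ∫ x, (f 0 * ψ x + ∫ t, F (x, t)) := by
        congr with x
        rw [hsection, hfg.2 x]
        ring
    _ = ∫ t, ∫ x, F (x, t) := by
        rw [integral_add (hψ.const_mul _) hF.integral_prod_left, integral_const_mul, hψ0,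
          mul_zero, zero_add, integral_integral_swap hF]
    _ = ∫ t, g t * ∫ x in Ici t, ψ x := by
        congr with t
        rw [← integral_mul_primitiveKernel hψ hψ0 t, ← integral_const_mul]
        congr with x
        ring

lemma gaussianPDFReal_zero_one (x : ℝ) :
    φ x = (Real.sqrt (2 * Real.pi))⁻¹ * Real.exp (-(x ^ 2 / 2)) := by
  simp [gaussianPDFReal_def, neg_div]

lemma abs_le_abs_of_mem_uIoc {x t : ℝ} (ht : t ∈ Ι 0 x) : |t| ≤ |x| := by
  rcases mem_uIoc.1 ht with ⟨h1, h2⟩ | ⟨h1, h2⟩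
  · rw [abs_of_pos h1, abs_of_pos (h1.trans_le h2)]; exact h2
  · rw [abs_of_nonpos h2, abs_of_neg (h1.trans_le h2)]; linarith

/-- The factor `exp (a * |x|)` absorbs the polynomial factors created by integrating; the
Gaussian weight beats `exp (c * x ^ 2)` as long as `c < 1 / 2`. -/
def GaussGrowth (c : ℝ) (h : ℝ → ℝ) : Prop :=
  ∃ C a : ℝ, 0 ≤ C ∧ 0 ≤ a ∧ ∀ x, |h x| ≤ C * Real.exp (a * |x| + c * x ^ 2)

namespace GaussGrowth

variable {c c' : ℝ} {h h' : ℝ → ℝ}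

lemma const_mul (hh : GaussGrowth c h) (r : ℝ) : GaussGrowth c fun x => r * h x := by
  obtain ⟨C, a, hC, ha, hb⟩ := hh
  refine ⟨|r| * C, a, by positivity, ha, fun x => ?_⟩
  rw [abs_mul, mul_assoc]
  exact mul_le_mul_of_nonneg_left (hb x) (abs_nonneg r)

lemma mul (hh : GaussGrowth c h) (hh' : GaussGrowth c' h') :
    GaussGrowth (c + c') fun x => h x * h' x := by
  obtain ⟨C, a, hC, ha, hb⟩ := hh
  obtain ⟨C', a', hC', ha', hb'⟩ := hh'
  refine ⟨C * C', a + a', by positivity, by positivity, fun x => ?_⟩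
  calc |h x * h' x|
      ≤ C * Real.exp (a * |x| + c * x ^ 2) * (C' * Real.exp (a' * |x| + c' * x ^ 2)) := by
        rw [abs_mul]; exact mul_le_mul (hb x) (hb' x) (abs_nonneg _) (by positivity)
    _ = C * C' * Real.exp ((a + a') * |x| + (c + c') * x ^ 2) := by
        rw [mul_mul_mul_comm, ← Real.exp_add]; ring_nf

lemma integral_abs (hh : GaussGrowth c h) (hc : 0 ≤ c) :
    GaussGrowth c fun x => ∫ t in Ι 0 x, |h t| := by
  obtain ⟨C, a, hC, ha, hb⟩ := hh
  refine ⟨C, a + 1, hC, by linarith, fun x => ?_⟩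
  have hsup : ∀ t ∈ Ι 0 x, ‖|h t|‖ ≤ C * Real.exp (a * |x| + c * x ^ 2) := by
    intro t ht
    have htx := abs_le_abs_of_mem_uIoc ht
    have htx2 : t ^ 2 ≤ x ^ 2 := sq_le_sq.2 htx
    rw [norm_abs_eq_norm, Real.norm_eq_abs]
    refine (hb t).trans (mul_le_mul_of_nonneg_left (Real.exp_le_exp.2 ?_) hC)
    nlinarith [mul_le_mul_of_nonneg_left htx ha, mul_le_mul_of_nonneg_left htx2 hc]
  have hvol : volume (Ι 0 x) < ⊤ := by rw [Real.volume_uIoc]; exact ENNReal.ofReal_lt_top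
  have hint := norm_setIntegral_le_of_norm_le_const hvol hsup
  rw [measureReal_def, Real.volume_uIoc, sub_zero, ENNReal.toReal_ofReal (abs_nonneg x),
    Real.norm_of_nonneg (integral_nonneg fun t => abs_nonneg _)] at hint
  rw [abs_of_nonneg (integral_nonneg fun t => abs_nonneg _)]
  calc ∫ t in Ι 0 x, |h t| ≤ C * Real.exp (a * |x| + c * x ^ 2) * |x| := hint
    _ ≤ C * Real.exp (a * |x| + c * x ^ 2) * Real.exp |x| := by
        gcongr; linarith [Real.add_one_le_exp |x|]
    _ = C * Real.exp ((a + 1) * |x| + c * x ^ 2) := by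
        rw [mul_assoc, ← Real.exp_add]; ring_nf

lemma integrable_mul_gaussianPDFReal (hh : GaussGrowth c h) (hc : c < 1 / 2)
    (hm : AEStronglyMeasurable h) : Integrable fun x => h x * φ x := by
  obtain ⟨C, a, hC, ha, hb⟩ := hh
  have hb2 : 0 < 1 - 2 * c := by linarith
  refine ((integrable_exp_neg_mul_sq (by linarith : 0 < (1 - 2 * c) / 4)).const_mul
    (C * Real.exp (a ^ 2 / (1 - 2 * c)))).mono'
    (hm.mul (measurable_gaussianPDFReal 0 1).aestronglyMeasurable)
    (Eventually.of_forall fun x => ?_)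
  have hφ : |φ x| ≤ Real.exp (-(x ^ 2 / 2)) := by
    rw [gaussianPDFReal_zero_one, abs_of_nonneg (by positivity)]
    refine mul_le_of_le_one_left (by positivity) (inv_le_one_of_one_le₀ ?_)
    rw [Real.one_le_sqrt]; nlinarith [Real.pi_gt_three]
  have hamgm : a * |x| ≤ a ^ 2 / (1 - 2 * c) + (1 - 2 * c) / 4 * x ^ 2 := by
    rw [div_add' _ _ _ hb2.ne', le_div_iff₀ hb2, ← sq_abs x]
    nlinarith [sq_nonneg (a - (1 - 2 * c) / 2 * |x|)]
  calc ‖h x * φ x‖ ≤ C * Real.exp (a * |x| + c * x ^ 2) * Real.exp (-(x ^ 2 / 2)) := by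
        rw [Real.norm_eq_abs, abs_mul]; exact mul_le_mul (hb x) hφ (abs_nonneg _) (by positivity)
    _ ≤ C * Real.exp (a ^ 2 / (1 - 2 * c)) * Real.exp (-((1 - 2 * c) / 4) * x ^ 2) := by
        rw [mul_assoc, mul_assoc, ← Real.exp_add, ← Real.exp_add]
        exact mul_le_mul_of_nonneg_left (Real.exp_le_exp.2 (by linarith)) hC

end GaussGrowth

lemma IsPseudoDeriv.gaussGrowth {f g : ℝ → ℝ} {c : ℝ} (hfg : IsPseudoDeriv f g)
    (hg : GaussGrowth c fun x => ∫ t in Ι 0 x, |g t|) (hc : 0 ≤ c) : GaussGrowth c f := by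
  obtain ⟨C, a, hC, ha, hb⟩ := hg
  refine ⟨|f 0| + C, a, by positivity, ha, fun x => ?_⟩
  have hE : 1 ≤ Real.exp (a * |x| + c * x ^ 2) := Real.one_le_exp (by positivity)
  have hprim : |∫ t in (0 : ℝ)..x, g t| ≤ ∫ t in Ι 0 x, |g t| := by
    simpa only [Real.norm_eq_abs] using intervalIntegral.norm_integral_le_integral_norm_uIoc
      (f := g) (μ := volume) (a := 0) (b := x)
  have hIx := (le_abs_self _).trans (hb x)
  rw [hfg.2 x]
  calc |f 0 + ∫ t in (0 : ℝ)..x, g t| ≤ |f 0| + C * Real.exp (a * |x| + c * x ^ 2) :=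
        (abs_add_le _ _).trans (by linarith)
    _ ≤ (|f 0| + C) * Real.exp (a * |x| + c * x ^ 2) := by nlinarith [abs_nonneg (f 0)]

lemma gaussGrowth_integral_abs_of_integrable_sq_mul {g : ℝ → ℝ}
    (hg : Integrable fun x => g x ^ 2 * φ x) :
    GaussGrowth (1 / 4) fun x => ∫ t in Ι 0 x, |g t| := by
  set I := ∫ x, g x ^ 2 * φ x
  set r := Real.sqrt (2 * Real.pi)
  have hI : 0 ≤ I :=
    integral_nonneg fun x => mul_nonneg (sq_nonneg _) (gaussianPDFReal_nonneg _ _ _)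
  refine ⟨(I + r) / 2, 1, by positivity, zero_le_one, fun x => ?_⟩
  set s := Real.exp (x ^ 2 / 4)
  -- AM-GM, with the weight `s` balancing the two terms
  have hpt : ∀ t ∈ Ι 0 x, |g t| ≤ s / 2 * (g t ^ 2 * φ t + r) := by
    intro t ht
    rw [← sq_abs (g t)]
    have htx : t ^ 2 ≤ x ^ 2 := sq_le_sq.2 (abs_le_abs_of_mem_uIoc ht)
    have hsPr : 1 ≤ s * (s * φ t * r) := by
      have hφr : φ t * r = Real.exp (-(t ^ 2 / 2)) := by
        rw [gaussianPDFReal_zero_one, mul_right_comm, inv_mul_cancel₀ (by positivity), one_mul]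
      rw [mul_assoc s, hφr, ← mul_assoc, ← Real.exp_add, ← Real.exp_add]
      exact Real.one_le_exp (by linarith)
    have hsP : 0 < s * φ t := mul_pos (Real.exp_pos _) (gaussianPDFReal_pos _ _ _ one_ne_zero)
    have key : s * φ t * (2 * |g t|) ≤ s * φ t * (s * (|g t| ^ 2 * φ t + r)) := by
      nlinarith [sq_nonneg (s * φ t * |g t| - 1)]
    linarith [le_of_mul_le_mul_left key hsP]
  have hmaj : IntegrableOn (fun t => s / 2 * (g t ^ 2 * φ t + r)) (Ι 0 x) :=
    (hg.integrableOn.add (integrableOn_const (by simp [Real.volume_uIoc]))).const_mul _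
  rw [abs_of_nonneg (integral_nonneg fun t => abs_nonneg _)]
  calc ∫ t in Ι 0 x, |g t| ≤ ∫ t in Ι 0 x, s / 2 * (g t ^ 2 * φ t + r) :=
        integral_mono_of_nonneg (Eventually.of_forall fun t => abs_nonneg _) hmaj
          (ae_restrict_of_forall_mem measurableSet_uIoc hpt)
    _ = s / 2 * ((∫ t in Ι 0 x, g t ^ 2 * φ t) + r * |x|) := by
        rw [integral_const_mul, integral_add hg.integrableOn
          (integrableOn_const (by simp [Real.volume_uIoc])), setIntegral_const, smul_eq_mul,
          measureReal_def, Real.volume_uIoc, sub_zero, ENNReal.toReal_ofReal (abs_nonneg x),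
          mul_comm |x|]
    _ ≤ s / 2 * (I * Real.exp |x| + r * Real.exp |x|) := by
        have h1 : (∫ t in Ι 0 x, g t ^ 2 * φ t) ≤ I := setIntegral_le_integral hg
          (Eventually.of_forall fun t => mul_nonneg (sq_nonneg _) (gaussianPDFReal_nonneg _ _ _))
        have h2 : |x| ≤ Real.exp |x| := by linarith [Real.add_one_le_exp |x|]
        have h3 : 1 ≤ Real.exp |x| := Real.one_le_exp (abs_nonneg x)
        gcongr
        nlinarith
    _ = (I + r) / 2 * Real.exp (1 * |x| + 1 / 4 * x ^ 2) := by
        rw [one_mul, Real.exp_add, show 1 / 4 * x ^ 2 = x ^ 2 / 4 by ring]; ring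

lemma continuous_integral_uIoc_abs {g : ℝ → ℝ} (hg : LocallyIntegrable g) :
    Continuous fun x => ∫ t in Ι 0 x, |g t| := by
  have hprim : Continuous fun x => ‖∫ t in (0 : ℝ)..x, |g t|‖ :=
    (intervalIntegral.continuous_primitive (fun a b =>
      (hg.integrableOn_isCompact isCompact_uIcc).intervalIntegrable.abs) 0).norm
  refine hprim.congr fun x => ?_
  rw [intervalIntegral.norm_integral_eq_norm_integral_uIoc,
    Real.norm_of_nonneg (integral_nonneg fun t => abs_nonneg _)]

lemma Polynomial.derivative_hermite_succ (n : ℕ) :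
    derivative (hermite (n + 1)) = (n + 1 : Polynomial ℤ) * hermite n := by
  induction n with
  | zero => simp
  | succ n ih =>
    rw [Polynomial.hermite_succ (n + 1), Polynomial.derivative_sub, Polynomial.derivative_mul, ih,
      Polynomial.derivative_X, Polynomial.hermite_succ n]
    simp only [Polynomial.derivative_mul, Polynomial.derivative_add,
      Polynomial.derivative_natCast, Polynomial.derivative_one]
    push_cast
    ring

lemma Real.sqrt_factorial_succ (n : ℕ) :
    Real.sqrt (n + 1).factorial = Real.sqrt (n + 1) * Real.sqrt n.factorial := by
  rw [Nat.factorial_succ, Nat.cast_mul, Real.sqrt_mul (by positivity)]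
  push_cast
  rfl

lemma hasDerivAt_gaussianPDFReal_zero_one (x : ℝ) : HasDerivAt φ (-x * φ x) x := by
  have hq : HasDerivAt (fun y : ℝ => -(y ^ 2 / 2)) (-x) x := by
    simpa using ((hasDerivAt_pow 2 x).div_const 2).fun_neg
  rw [funext gaussianPDFReal_zero_one]
  exact (hq.exp.const_mul _).congr_deriv (by ring)

lemma hasDerivAt_hermiteFun (n : ℕ) (x : ℝ) :
    HasDerivAt (hermiteFun (n + 1)) (Real.sqrt (n + 1) * hermiteFun n x) x := by
  have h := (Polynomial.hasDerivAt_aeval (hermite (n + 1)) x).div_const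
    (Real.sqrt (n + 1).factorial)
  refine (h : HasDerivAt (hermiteFun (n + 1)) _ x).congr_deriv ?_
  have hs : Real.sqrt (n + 1) ≠ 0 := by positivity
  rw [Polynomial.derivative_hermite_succ, map_mul, Real.sqrt_factorial_succ, hermiteFun]
  field_simp
  rw [Real.sq_sqrt (by positivity)]
  simp [mul_comm]

lemma sqrt_succ_mul_hermiteFun_succ (n : ℕ) (x : ℝ) :
    Real.sqrt (n + 1) * hermiteFun (n + 1) x =
      aeval x (hermite (n + 1)) / Real.sqrt n.factorial := by
  have hs : Real.sqrt (n + 1) ≠ 0 := by positivity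
  rw [hermiteFun, Real.sqrt_factorial_succ]
  field_simp

lemma hasDerivAt_hermiteFun_mul_gaussianPDFReal (n : ℕ) (x : ℝ) :
    HasDerivAt (fun y => hermiteFun n y * φ y)
      (-(Real.sqrt (n + 1) * (hermiteFun (n + 1) x * φ x))) x := by
  have h := ((Polynomial.hasDerivAt_aeval (hermite n) x).div_const
    (Real.sqrt n.factorial)).mul (hasDerivAt_gaussianPDFReal_zero_one x)
  refine (h : HasDerivAt (fun y => hermiteFun n y * φ y) _ x).congr_deriv ?_
  rw [← mul_assoc (Real.sqrt _), sqrt_succ_mul_hermiteFun_succ, Polynomial.hermite_succ, map_sub,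
    map_mul, Polynomial.aeval_X]
  ring

lemma continuous_hermiteFun (n : ℕ) : Continuous (hermiteFun n) :=
  (Polynomial.continuous_aeval _).div_const _

lemma hermiteFun_zero (x : ℝ) : hermiteFun 0 x = 1 := by
  simp [hermiteFun]

lemma isPseudoDeriv_of_hasDerivAt {f f' : ℝ → ℝ} (hf : ∀ x, HasDerivAt f (f' x) x)
    (hf' : Continuous f') : IsPseudoDeriv f f' :=
  ⟨fun _ _ => hf'.integrableOn_Icc, fun x => by
    rw [intervalIntegral.integral_eq_sub_of_hasDerivAt (fun y _ => hf y)
      (hf'.intervalIntegrable 0 x)]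
    ring⟩

lemma isPseudoDeriv_hermiteFun_succ (n : ℕ) :
    IsPseudoDeriv (hermiteFun (n + 1)) fun x => Real.sqrt (n + 1) * hermiteFun n x :=
  isPseudoDeriv_of_hasDerivAt (hasDerivAt_hermiteFun n)
    (continuous_const.mul (continuous_hermiteFun n))

lemma gaussGrowth_hermiteFun (n : ℕ) : GaussGrowth 0 (hermiteFun n) := by
  induction n with
  | zero => exact ⟨1, 0, zero_le_one, le_rfl, fun x => by simp [hermiteFun_zero]⟩
  | succ n ih =>
    exact (isPseudoDeriv_hermiteFun_succ n).gaussGrowth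
      ((ih.const_mul _).integral_abs le_rfl) le_rfl

lemma integrable_hermiteFun_mul_gaussianPDFReal (n : ℕ) :
    Integrable fun x => hermiteFun n x * φ x :=
  (gaussGrowth_hermiteFun n).integrable_mul_gaussianPDFReal (by norm_num)
    (continuous_hermiteFun n).aestronglyMeasurable

lemma integral_hermiteFun_succ_mul_gaussianPDFReal (n : ℕ) :
    ∫ x, hermiteFun (n + 1) x * φ x = 0 := by
  have h := integral_eq_zero_of_hasDerivAt_of_integrable
    (hasDerivAt_hermiteFun_mul_gaussianPDFReal n)
    ((integrable_hermiteFun_mul_gaussianPDFReal (n + 1)).const_mul _).neg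
    (integrable_hermiteFun_mul_gaussianPDFReal n)
  rw [integral_neg, integral_const_mul, neg_eq_zero] at h
  exact (mul_eq_zero.1 h).resolve_left (by positivity)

lemma integral_Ici_hermiteFun_succ_mul_gaussianPDFReal (n : ℕ) (t : ℝ) :
    ∫ x in Ici t, hermiteFun (n + 1) x * φ x = hermiteFun n t * φ t / Real.sqrt (n + 1) := by
  have hderiv := fun x (_ : x ∈ Ici t) => hasDerivAt_hermiteFun_mul_gaussianPDFReal n x
  have hint := ((integrable_hermiteFun_mul_gaussianPDFReal (n + 1)).const_mul
    (Real.sqrt (n + 1))).neg.integrableOn (s := Ioi t)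
  have h := integral_Ioi_of_hasDerivAt_of_tendsto' hderiv hint
    (tendsto_zero_of_hasDerivAt_of_integrableOn_Ioi (fun x hx => hderiv x (mem_Ici_of_Ioi hx))
      hint (integrable_hermiteFun_mul_gaussianPDFReal n).integrableOn)
  rw [integral_neg, integral_const_mul, zero_sub, neg_inj] at h
  rw [integral_Ici_eq_integral_Ioi, eq_div_iff (by positivity), mul_comm, h]

lemma integral_stdGaussian (u : ℝ → ℝ) : ∫ x, u x ∂stdGaussian = ∫ x, u x * φ x := by
  simp_rw [_root_.stdGaussian, integral_gaussianReal_eq_integral_smul one_ne_zero, smul_eq_mul,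
    mul_comm]

lemma integrable_stdGaussian_iff {u : ℝ → ℝ} :
    Integrable u stdGaussian ↔ Integrable fun x => u x * φ x := by
  simp_rw [_root_.stdGaussian, gaussianReal_of_var_ne_zero 0 one_ne_zero,
    integrable_withDensity_iff_integrable_smul' (measurable_gaussianPDF 0 1)
      (ae_of_all _ fun _ => gaussianPDF_lt_top), toReal_gaussianPDF, smul_eq_mul, mul_comm]

lemma hermiteCoeff_eq_integral (f : ℝ → ℝ) (n : ℕ) :
    hermiteCoeff f n = ∫ x, f x * (hermiteFun n x * φ x) := by
  simp_rw [hermiteCoeff, integral_stdGaussian, mul_assoc]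

lemma hermiteCoeff_const_mul (r : ℝ) (u : ℝ → ℝ) (n : ℕ) :
    hermiteCoeff (fun x => r * u x) n = r * hermiteCoeff u n := by
  simp_rw [hermiteCoeff, mul_assoc, integral_const_mul]

theorem IsPseudoDeriv.hermiteCoeff_succ {f g : ℝ → ℝ} {c : ℝ} (hfg : IsPseudoDeriv f g)
    (hg : GaussGrowth c fun x => ∫ t in Ι 0 x, |g t|) (hc : c < 1 / 2) (n : ℕ) :
    hermiteCoeff f (n + 1) = hermiteCoeff g n / Real.sqrt (n + 1) := by
  have hdom : Integrable fun x => hermiteFun (n + 1) x * φ x * ∫ t in Ι 0 x, |g t| :=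
    (((gaussGrowth_hermiteFun (n + 1)).mul hg).integrable_mul_gaussianPDFReal (by linarith)
      ((continuous_hermiteFun _).mul
        (continuous_integral_uIoc_abs hfg.locallyIntegrable)).aestronglyMeasurable).congr
      (ae_of_all _ fun x => by ring)
  rw [hermiteCoeff_eq_integral, hfg.integral_mul_eq (integrable_hermiteFun_mul_gaussianPDFReal _)
    (integral_hermiteFun_succ_mul_gaussianPDFReal n) hdom, hermiteCoeff_eq_integral,
    ← integral_div]
  simp_rw [integral_Ici_hermiteFun_succ_mul_gaussianPDFReal, mul_div_assoc]

lemma hermiteCoeff_hermiteFun_comm (i j : ℕ) :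
    hermiteCoeff (hermiteFun i) j = hermiteCoeff (hermiteFun j) i := by
  simp_rw [hermiteCoeff, mul_comm]

lemma hermiteCoeff_hermiteFun_zero_succ (j : ℕ) : hermiteCoeff (hermiteFun 0) (j + 1) = 0 := by
  simp_rw [hermiteCoeff_eq_integral, hermiteFun_zero, one_mul]
  exact integral_hermiteFun_succ_mul_gaussianPDFReal j

lemma hermiteCoeff_hermiteFun_succ_succ (i j : ℕ) :
    hermiteCoeff (hermiteFun (i + 1)) (j + 1) =
      Real.sqrt (i + 1) / Real.sqrt (j + 1) * hermiteCoeff (hermiteFun i) j := by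
  rw [(isPseudoDeriv_hermiteFun_succ i).hermiteCoeff_succ
    (((gaussGrowth_hermiteFun i).const_mul _).integral_abs le_rfl) (by norm_num),
    hermiteCoeff_const_mul]
  ring

theorem hermiteCoeff_hermiteFun (i j : ℕ) :
    hermiteCoeff (hermiteFun i) j = if i = j then 1 else 0 := by
  induction j generalizing i with
  | zero =>
    cases i with
    | zero => simp [hermiteCoeff_eq_integral, hermiteFun_zero, integral_gaussianPDFReal_eq_one]
    | succ i =>
      rw [hermiteCoeff_hermiteFun_comm, hermiteCoeff_hermiteFun_zero_succ, if_neg i.succ_ne_zero]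
  | succ j ih =>
    cases i with
    | zero => rw [hermiteCoeff_hermiteFun_zero_succ, if_neg j.succ_ne_zero.symm]
    | succ i =>
      rw [hermiteCoeff_hermiteFun_succ_succ, ih]
      rcases eq_or_ne i j with rfl | h
      · simp [div_self (by positivity : Real.sqrt ((i : ℝ) + 1) ≠ 0)]
      · simp [h]

lemma memLp_hermiteFun (n : ℕ) : MemLp (hermiteFun n) 2 stdGaussian := by
  have hc := continuous_hermiteFun n
  refine (memLp_two_iff_integrable_sq hc.aestronglyMeasurable).2 (integrable_stdGaussian_iff.2 ?_)
  simpa only [sq] using ((gaussGrowth_hermiteFun n).mul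
    (gaussGrowth_hermiteFun n)).integrable_mul_gaussianPDFReal (by norm_num)
    (hc.mul hc).aestronglyMeasurable

lemma MeasureTheory.MemLp.inner_toLp_eq_integral {α : Type*} [MeasurableSpace α] {μ : Measure α}
    {u v : α → ℝ} (hu : MemLp u 2 μ) (hv : MemLp v 2 μ) :
    inner ℝ (hu.toLp u) (hv.toLp v) = ∫ x, u x * v x ∂μ := by
  rw [L2.inner_def]
  refine integral_congr_ae ?_
  filter_upwards [hu.coeFn_toLp, hv.coeFn_toLp] with x hux hvx
  rw [hux, hvx, Real.inner_apply]

theorem tendsto_hermiteCoeff_zero {g : ℝ → ℝ} (hg : MemLp g 2 stdGaussian) :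
    Tendsto (hermiteCoeff g) atTop (𝓝 0) := by
  set e : ℕ → Lp ℝ 2 stdGaussian := fun n => (memLp_hermiteFun n).toLp (hermiteFun n)
  have he : Orthonormal ℝ e := by
    rw [orthonormal_iff_ite]
    intro i j
    rw [MemLp.inner_toLp_eq_integral, ← hermiteCoeff_hermiteFun i j, hermiteCoeff]
  have hinner : ∀ n, inner ℝ (e n) (hg.toLp g) = hermiteCoeff g n := fun n => by
    rw [MemLp.inner_toLp_eq_integral, hermiteCoeff]
    simp_rw [mul_comm]
  have hsq := (he.inner_products_summable (hg.toLp g)).tendsto_atTop_zero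
  simp only [hinner, Real.norm_eq_abs, sq_abs] at hsq
  have habs := hsq.sqrt
  simp only [Real.sqrt_sq_eq_abs, Real.sqrt_zero] at habs
  exact (tendsto_zero_iff_abs_tendsto_zero _).2 habs

lemma IsIterPseudoDeriv.exists_of_succ {m : ℕ} {f g : ℝ → ℝ}
    (h : IsIterPseudoDeriv (m + 1) f g) : ∃ f', IsPseudoDeriv f f' ∧ IsIterPseudoDeriv m f' g := by
  obtain ⟨gs, rfl, rfl, hgs⟩ := h
  exact ⟨gs 1, hgs 0 m.succ_pos, fun i => gs (i + 1), rfl, rfl,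
    fun i hi => hgs (i + 1) (by omega)⟩

lemma IsIterPseudoDeriv.gaussGrowth_integral_abs {m : ℕ} {f g : ℝ → ℝ}
    (h : IsIterPseudoDeriv m f g) (hg : Integrable fun x => g x ^ 2 * φ x) :
    GaussGrowth (1 / 4) fun x => ∫ t in Ι 0 x, |f t| := by
  induction m generalizing f with
  | zero =>
    obtain ⟨gs, rfl, rfl, -⟩ := h
    exact gaussGrowth_integral_abs_of_integrable_sq_mul hg
  | succ m ih =>
    obtain ⟨f', hff', h'⟩ := h.exists_of_succ
    exact (hff'.gaussGrowth (ih h') (by norm_num)).integral_abs (by norm_num)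

theorem IsIterPseudoDeriv.hermiteCoeff_add {m : ℕ} {f g : ℝ → ℝ} (h : IsIterPseudoDeriv m f g)
    (hg : Integrable fun x => g x ^ 2 * φ x) (n : ℕ) :
    hermiteCoeff f (n + m) = hermiteCoeff g n / Real.sqrt ((n + 1).ascFactorial m) := by
  induction m generalizing f with
  | zero =>
    obtain ⟨gs, rfl, rfl, -⟩ := h
    simp
  | succ m ih =>
    obtain ⟨f', hff', h'⟩ := h.exists_of_succ
    rw [← add_assoc, hff'.hermiteCoeff_succ (h'.gaussGrowth_integral_abs hg) (by norm_num), ih h',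
      Nat.ascFactorial_succ, Nat.cast_mul, Real.sqrt_mul (by positivity), div_div, mul_comm]
    push_cast
    ring_nf

lemma Nat.add_add_one_pow_le_mul_ascFactorial (n m : ℕ) :
    (n + m + 1) ^ m ≤ (m + 1) ^ m * (n + 1).ascFactorial m :=
  calc (n + m + 1) ^ m ≤ ((m + 1) * (n + 1)) ^ m := Nat.pow_le_pow_left (by nlinarith) m
    _ = (m + 1) ^ m * (n + 1) ^ m := mul_pow _ _ _
    _ ≤ (m + 1) ^ m * (n + 1).ascFactorial m :=
        Nat.mul_le_mul_left _ (Nat.pow_succ_le_ascFactorial (n + 1) m)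

lemma Real.rpow_neg_natCast_div_two {x : ℝ} (hx : 0 ≤ x) (m : ℕ) :
    x ^ (-(m : ℝ) / 2) = (Real.sqrt (x ^ m))⁻¹ := by
  rw [Real.sqrt_eq_rpow, ← Real.rpow_natCast, ← Real.rpow_mul hx, ← Real.rpow_neg hx]
  ring_nf

lemma isBigO_inv_sqrt_ascFactorial (m : ℕ) :
    (fun n : ℕ => (Real.sqrt ((n + 1).ascFactorial m))⁻¹) =O[atTop]
      fun n => (((n + m : ℕ) : ℝ) + 1) ^ (-(m : ℝ) / 2) := by
  refine IsBigO.of_bound (Real.sqrt ((m + 1) ^ m)) (Eventually.of_forall fun n => ?_)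
  have hA : 0 < Real.sqrt ((n + 1).ascFactorial m) := by
    have := Nat.ascFactorial_pos n m; positivity
  rw [Real.rpow_neg_natCast_div_two (by positivity), norm_inv, norm_inv,
    Real.norm_of_nonneg hA.le, Real.norm_of_nonneg (Real.sqrt_nonneg _), ← div_eq_mul_inv,
    inv_le_comm₀ hA (by positivity), inv_div, div_le_iff₀ (by positivity),
    ← Real.sqrt_mul (by positivity), mul_comm]
  exact Real.sqrt_le_sqrt (by exact_mod_cast Nat.add_add_one_pow_le_mul_ascFactorial n m)

lemma Asymptotics.IsLittleO.of_comp_add_nat {u v : ℕ → ℝ} (k : ℕ)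
    (h : (fun n => u (n + k)) =o[atTop] fun n => v (n + k)) : u =o[atTop] v := by
  have hk : ∀ᶠ N in atTop, N - k + k = N :=
    eventually_atTop.2 ⟨k, fun N hN => Nat.sub_add_cancel hN⟩
  exact (h.comp_tendsto (tendsto_sub_atTop_nat k)).congr'
    (hk.mono fun N hN => by simp only [Function.comp, hN])
    (hk.mono fun N hN => by simp only [Function.comp, hN])

/-- if `f` has an `m`-fold pseudo-derivative in `L²(γ)`, then
`a_n(f) = o((n+1)^{−m/2})`. -/
theorem hermiteCoeff_littleO_of_iterPseudoDeriv (m : ℕ) (f g : ℝ → ℝ)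
    (h : IsIterPseudoDeriv m f g) (hg : MemLp g 2 stdGaussian) :
    (fun n : ℕ => hermiteCoeff f n)
      =o[atTop] (fun n : ℕ => ((n : ℝ) + 1) ^ (-(m : ℝ) / 2)) := by
  have hg2 : Integrable fun x => g x ^ 2 * φ x :=
    integrable_stdGaussian_iff.1 ((memLp_two_iff_integrable_sq hg.aestronglyMeasurable).1 hg)
  refine IsLittleO.of_comp_add_nat m ?_
  simp_rw [h.hermiteCoeff_add hg2, div_eq_inv_mul]
  simpa only [mul_one, div_eq_inv_mul] using (isBigO_inv_sqrt_ascFactorial m).mul_isLittleO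
    ((isLittleO_one_iff ℝ).2 (tendsto_hermiteCoeff_zero hg))
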